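/- Let R be a binary tree, let M be a model of the L-theory T_R, let φ'(x, y, z̄) be an L-formula in prenex normal form with radius r, let c̄ be a tuple of elements of M, and suppose the formula φ(x, y) := φ'(x, y, c̄) is mutually algebraic over M. Then there is a finite set X ⊆ M such that for all a, b ∈ M with M ⊨ φ(a, b), either the distance between a and b is at most r, or a ∈ X, or b ∈ X. -/

import Mathlib

open FirstOrder FirstOrder.Language

/-- The function symbols of the language `L`: a constant `0` and unary functions `S`, `P`. -/
inductive LFunc : ℕ → Type
  | zero : LFunc 0
  | succ : LFunc 1
  | pred : LFunc 1

/-- The relation symbols of the language `L`: a unary relation `A`. -/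
inductive LRel : ℕ → Type
  | A : LRel 1

/-- The first-order language with a constant symbol `0`, unary function symbols `S` and `P`,
and a unary relation symbol `A`. -/
def L : Language := ⟨LFunc, LRel⟩

/-- The reduct `L₀` of `L` without the relation symbol `A`. -/
def L₀ : Language := ⟨LFunc, fun _ => Empty⟩

/-- The inclusion of `L₀` into `L`. -/
def incl : L₀ →ᴸ L where
  onFunction := fun {_} f => f
  onRelation := fun {_} r => Empty.elim r

/-- `ℤ` as an `L₀`-structure, interpreting `0` as zero, `S` as successor, `P` as predecessor. -/
instance intL0Structure : L₀.Structure ℤ where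
  funMap := fun f v => match f with
    | .zero => 0
    | .succ => v 0 + 1
    | .pred => v 0 - 1
  RelMap := fun r _ => Empty.elim r

/-- The `L`-term `0`. -/
def zeroT {α : Type*} : L.Term α := Term.func LFunc.zero ![]

/-- The `L`-term `S t`. -/
def succT {α : Type*} (t : L.Term α) : L.Term α := Term.func LFunc.succ ![t]

/-- The `L`-term `P t`. -/
def predT {α : Type*} (t : L.Term α) : L.Term α := Term.func LFunc.pred ![t]

/-- The `L`-term `Sᵏ t`. -/
def iterST {α : Type*} (k : ℕ) (t : L.Term α) : L.Term α := succT^[k] t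

/-- The `L`-term `Pᵏ t`. -/
def iterPT {α : Type*} (k : ℕ) (t : L.Term α) : L.Term α := predT^[k] t

/-- The atomic `L`-formula `A t`. -/
def Aform {α : Type*} (t : L.Term α) : L.Formula α := Relations.formula LRel.A ![t]

/-- The disjunction of the formulas `f i` for `i ∈ s` (the older Mathlib `BoundedFormula.iSup`). -/
noncomputable def finsetISup {L : Language} {α β : Type*} {n : ℕ} (s : Finset β)
    (f : β → L.BoundedFormula α n) : L.BoundedFormula α n :=
  (s.toList.map f).foldr (· ⊔ ·) ⊥

/-- The conjunction of the formulas `f i` for `i ∈ s` (the older Mathlib `BoundedFormula.iInf`). -/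
noncomputable def finsetIInf {L : Language} {α β : Type*} {n : ℕ} (s : Finset β)
    (f : β → L.BoundedFormula α n) : L.BoundedFormula α n :=
  (s.toList.map f).foldr (· ⊓ ·) ⊤

/-- The sentence asserting that the truth values of `A(0), A(S0), …, A(Sⁿ⁻¹0)` follow the
pattern `σ`. -/
noncomputable def patternSentence (n : ℕ) (σ : Fin n → Bool) : L.Sentence :=
  finsetIInf Finset.univ fun i : Fin n =>
    if σ i then Aform (iterST i zeroT) else (Aform (iterST i zeroT)).not

/-- The `n`-th tree axiom for `R`: the disjunction, over all length-`n` strings `σ ∈ R`, of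
the sentence asserting that `A(0), …, A(Sⁿ⁻¹0)` follow the pattern `σ`. -/
noncomputable def treeAxiom (R : Set (List Bool)) (n : ℕ) : L.Sentence :=
  letI := Classical.decPred fun σ : Fin n → Bool => List.ofFn σ ∈ R
  finsetISup (Finset.univ.filter fun σ : Fin n → Bool => List.ofFn σ ∈ R)
    (patternSentence n)

/-- The theory `T_R`: all `L₀`-sentences true in `(ℤ, 0, succ, pred)`, together with the
tree axioms for `R`. -/
noncomputable def TR (R : Set (List Bool)) : L.Theory :=
  incl.onTheory (L₀.completeTheory ℤ) ∪ Set.range (treeAxiom R)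

/-- `R ⊆ List Bool` is a binary tree if it is closed under initial segments. -/
def IsBinaryTree (R : Set (List Bool)) : Prop :=
  ∀ σ ∈ R, ∀ τ : List Bool, τ <+: σ → τ ∈ R

/-- The length-`n` initial segment of an infinite binary sequence `x : ℕ → Bool`. -/
def initSeg (x : ℕ → Bool) (n : ℕ) : List Bool :=
  List.ofFn fun i : Fin n => x i

/-- The interpretation of `S` in an `L`-structure. -/
def SM {M : Type*} [L.Structure M] (a : M) : M :=
  Structure.funMap (L := L) LFunc.succ ![a]

/-- The interpretation of `P` in an `L`-structure. -/
def PM {M : Type*} [L.Structure M] (a : M) : M :=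
  Structure.funMap (L := L) LFunc.pred ![a]

/-- The interpretation of `0` in an `L`-structure. -/
def zeroM {M : Type*} [L.Structure M] : M :=
  Structure.funMap (L := L) LFunc.zero ![]

/-- The interpretation of `A` in an `L`-structure. -/
def AM {M : Type*} [L.Structure M] (a : M) : Prop :=
  Structure.RelMap (L := L) LRel.A ![a]

/-- `a + k`: apply `S` (if `k ≥ 0`) or `P` (if `k < 0`) `|k|` many times to `a`. -/
def shift {M : Type*} [L.Structure M] (a : M) (k : ℤ) : M :=
  if 0 ≤ k then SM^[k.toNat] a else PM^[(-k).toNat] a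

/-- `a` and `b` have the same `r`-neighborhood type: for every `k` with `|k| ≤ r`,
`A(a + k)` holds iff `A(b + k)` holds. -/
def SameNbhdType {M : Type*} [L.Structure M] (r : ℕ) (a b : M) : Prop :=
  ∀ k : ℤ, |k| ≤ (r : ℤ) → (AM (shift a k) ↔ AM (shift b k))

/-- The tuples `a` and `b` (with the convention that the `0`-th coordinate is `0^M`) have the
same `r`-type: the same `r`-distance table (for all indices `i`, `j` and all `k` with
`|k| ≤ r`, the `j`-th coordinate equals the `i`-th coordinate plus `k` on one side iff it
does on the other) and the same `r`-neighborhood types coordinatewise. -/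
def extTuple {M : Type*} [L.Structure M] {n : ℕ} (a : Fin n → M) : Fin (n + 1) → M :=
  Fin.cases zeroM a

/-- Same `r`-type of two tuples (see above). -/
def SameRType {M : Type*} [L.Structure M] {n : ℕ} (r : ℕ) (a b : Fin n → M) : Prop :=
  (∀ i j : Fin (n + 1), ∀ k : ℤ, |k| ≤ (r : ℤ) →
      (extTuple a j = shift (extTuple a i) k ↔ extTuple b j = shift (extTuple b i) k)) ∧
  ∀ i : Fin n, SameNbhdType r (a i) (b i)

/-- The number of occurrences of `S` and `P` contributed by a single function symbol. -/
def funcWeight : ∀ {n : ℕ}, L.Functions n → ℕ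
  | _, LFunc.zero => 0
  | _, LFunc.succ => 1
  | _, LFunc.pred => 1

/-- The total number of occurrences of `S` and `P` in a term. -/
def termRad {α : Type*} : L.Term α → ℕ
  | .var _ => 0
  | .func f ts => funcWeight f + Finset.univ.sum fun i => termRad (ts i)

/-- The radius of a formula: for quantifier-free formulas, the total number of occurrences of
`S` and `P`; each quantifier doubles the radius. -/
def rad {α : Type*} : ∀ {n : ℕ}, L.BoundedFormula α n → ℕ
  | _, .falsum => 0
  | _, .equal t₁ t₂ => termRad t₁ + termRad t₂
  | _, .rel _ ts => Finset.univ.sum fun i => termRad (ts i)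
  | _, .imp φ ψ => rad φ + rad ψ
  | _, .all φ => 2 * rad φ

/-- A formula `φ` with free variables `Fin n` and parameters from `M` (the `Sum.inr`
variables, which are always assigned to themselves via `id`) is *mutually algebraic over `M`*
if there is `k : ℕ` such that for every partition of the free variables `Fin n` into two
nonempty sets `s` and `sᶜ` and every assignment `a` to the variables in `s`, there are at
most `k` assignments to the variables in `sᶜ` making `φ` true. -/
def IsMutuallyAlgebraic (L' : Language) (M : Type*) [L'.Structure M] {n : ℕ}
    (φ : L'.Formula (Fin n ⊕ M)) : Prop :=
  ∃ k : ℕ, ∀ s : Set (Fin n), s.Nonempty → sᶜ.Nonempty → ∀ a : Fin n → M,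
    {v : Fin n → M | (∀ i ∈ s, v i = a i) ∧ φ.Realize (Sum.elim v id)}.Finite ∧
    {v : Fin n → M | (∀ i ∈ s, v i = a i) ∧ φ.Realize (Sum.elim v id)}.ncard ≤ k

/-!
In a model of `T_R` the successor is a bijection with inverse `P` and without cycles, so the
model is a disjoint union of `ℤ`-chains decorated by the predicate `A`. A back-and-forth
argument, in which each quantifier halves the radius (matching the doubling in `rad`), shows
that a prenex formula of radius `r` cannot tell apart two assignments that differ in one entry,
as long as both values are `r`-far from the other entries and from `0` and see the same pattern
of `A` on their `r`-neighbourhoods. There are finitely many such patterns, so let `X` be the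
`r`-neighbourhood of `0` and the parameters together with the finitely many elements whose
pattern is realised only finitely often. If `φ(a, b)` holds with `b ∉ X` and `b` far from `a`,
then `φ(a, b')` holds for the infinitely many `b'` far from `a, b, 0, c̄` with the pattern of
`b`, contradicting mutual algebraicity.
-/

section
variable {M : Type*} [L.Structure M]

lemma funMap_zero (v : Fin 0 → M) : Structure.funMap (L := L) LFunc.zero v = zeroM :=
  congrArg _ (Subsingleton.elim _ _)

@[simp] lemma funMap_succ (v : Fin 1 → M) : Structure.funMap (L := L) LFunc.succ v = SM (v 0) :=
  congrArg _ (funext fun i => by fin_cases i; rfl)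

@[simp] lemma funMap_pred (v : Fin 1 → M) : Structure.funMap (L := L) LFunc.pred v = PM (v 0) :=
  congrArg _ (funext fun i => by fin_cases i; rfl)

lemma relMap_A (v : Fin 1 → M) : Structure.RelMap (L := L) LRel.A v ↔ AM (v 0) :=
  Iff.of_eq (congrArg _ (funext fun i => by fin_cases i; rfl))

def succT₀ {α : Type*} (t : L₀.Term α) : L₀.Term α := Term.func LFunc.succ ![t]

def predT₀ {α : Type*} (t : L₀.Term α) : L₀.Term α := Term.func LFunc.pred ![t]

@[simp] lemma int_realize_succT₀ {α : Type*} (t : L₀.Term α) (v : α → ℤ) :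
    (succT₀ t).realize v = t.realize v + 1 := rfl

@[simp] lemma int_realize_predT₀ {α : Type*} (t : L₀.Term α) (v : α → ℤ) :
    (predT₀ t).realize v = t.realize v - 1 := rfl

@[simp] lemma realize_onTerm_succT₀ {α : Type*} (t : L₀.Term α) (v : α → M) :
    (incl.onTerm (succT₀ t)).realize v = SM ((incl.onTerm t).realize v) := by
  simp [succT₀, LHom.onTerm, incl, Term.realize]

@[simp] lemma realize_onTerm_predT₀ {α : Type*} (t : L₀.Term α) (v : α → M) :
    (incl.onTerm (predT₀ t)).realize v = PM ((incl.onTerm t).realize v) := by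
  simp [predT₀, LHom.onTerm, incl, Term.realize]

lemma int_realize_iterate_succT₀ {α : Type*} (n : ℕ) (t : L₀.Term α) (v : α → ℤ) :
    (succT₀^[n] t).realize v = t.realize v + n := by
  induction n with
  | zero => simp
  | succ n ih => rw [Function.iterate_succ_apply', int_realize_succT₀, ih]; push_cast; ring

lemma realize_onTerm_iterate_succT₀ {α : Type*} (n : ℕ) (t : L₀.Term α) (v : α → M) :
    (incl.onTerm (succT₀^[n] t)).realize v = SM^[n] ((incl.onTerm t).realize v) := by
  induction n with
  | zero => simp
  | succ n ih => rw [Function.iterate_succ_apply', Function.iterate_succ_apply',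
      realize_onTerm_succT₀, ih]

lemma realize_onSentence_of_int {R : Set (List Bool)} (hM : M ⊨ TR R) {ψ : L₀.Sentence}
    (hψ : (ℤ : Type) ⊨ ψ) : M ⊨ incl.onSentence ψ :=
  hM.realize_of_mem _ (Or.inl ⟨ψ, hψ, rfl⟩)

class IsFreeSucc (M : Type*) [L.Structure M] : Prop where
  pred_succ : ∀ x : M, PM (SM x) = x
  succ_pred : ∀ x : M, SM (PM x) = x
  iterate_succ_ne : ∀ (n : ℕ) (x : M), SM^[n + 1] x ≠ x

theorem IsFreeSucc.of_model {R : Set (List Bool)} (hM : M ⊨ TR R) : IsFreeSucc M where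
  pred_succ x := by
    simpa [LHom.onSentence, LHom.onBoundedFormula, Term.bdEqual, BoundedFormula.Realize,
      Fin.snoc] using realize_onSentence_of_int hM (ψ := ∀' (predT₀ (succT₀ &0) =' &0))
        (fun x => by simp [Fin.snoc]) x
  succ_pred x := by
    simpa [LHom.onSentence, LHom.onBoundedFormula, Term.bdEqual, BoundedFormula.Realize,
      Fin.snoc] using realize_onSentence_of_int hM (ψ := ∀' (succT₀ (predT₀ &0) =' &0))
        (fun x => by simp [Fin.snoc]) x
  iterate_succ_ne n x := by
    simpa [LHom.onSentence, LHom.onBoundedFormula, Term.bdEqual, BoundedFormula.Realize,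
      Fin.snoc, realize_onTerm_iterate_succT₀, Function.iterate_succ_apply'] using
      realize_onSentence_of_int hM (ψ := ∀' ∼(succT₀^[n + 1] &0 =' &0))
        (fun x => by simp [int_realize_iterate_succT₀, Fin.snoc]; omega) x

def IsFreeSucc.succPerm (M : Type*) [L.Structure M] [IsFreeSucc M] : Equiv.Perm M :=
  ⟨SM, PM, pred_succ, succ_pred⟩

@[simp] lemma shift_zero (a : M) : shift a 0 = a := rfl

lemma succ_eq_shift (a : M) : SM a = shift a 1 := rfl

lemma pred_eq_shift (a : M) : PM a = shift a (-1) := rfl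

section FreeSucc
variable [IsFreeSucc M]
open IsFreeSucc

lemma shift_eq_succPerm_zpow (a : M) (k : ℤ) : shift a k = (succPerm M ^ k) a := by
  unfold shift
  split_ifs with hk
  · lift k to ℕ using hk
    simp; rfl
  · obtain ⟨n, rfl⟩ : ∃ n : ℕ, k = -n := ⟨(-k).toNat, by omega⟩
    simp; rfl

lemma shift_shift (a : M) (k l : ℤ) : shift (shift a k) l = shift a (k + l) := by
  simp only [shift_eq_succPerm_zpow, ← Equiv.Perm.mul_apply, ← zpow_add, add_comm]

lemma eq_shift_iff {a b : M} {k : ℤ} : b = shift a k ↔ a = shift b (-k) := by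
  constructor <;> rintro rfl <;> simp [shift_shift]

lemma shift_eq_shift_iff {a b : M} {k l : ℤ} : shift a k = shift b l ↔ a = shift b (l - k) := by
  rw [eq_comm, eq_shift_iff, shift_shift, ← sub_eq_add_neg]

lemma self_eq_shift_iff {a : M} {k : ℤ} : a = shift a k ↔ k = 0 := by
  refine ⟨fun h => ?_, by rintro rfl; rfl⟩
  wlog hk : 0 ≤ k generalizing k
  · have := this (eq_shift_iff.1 h) (by omega); omega
  lift k to ℕ using hk
  cases k with
  | zero => rfl
  | succ n => exact absurd h.symm (iterate_succ_ne n a)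

end FreeSucc

def IsNear (ρ : ℕ) (a b : M) : Prop := ∃ k : ℤ, |k| ≤ ρ ∧ b = shift a k

lemma IsNear.symm [IsFreeSucc M] {ρ : ℕ} {a b : M} (h : IsNear ρ a b) : IsNear ρ b a :=
  let ⟨k, hk, hb⟩ := h
  ⟨-k, by rwa [abs_neg], eq_shift_iff.1 hb⟩

def nbhd (ρ : ℕ) (S : Set M) : Set M := {b | ∃ a ∈ S, IsNear ρ a b}

lemma Set.Finite.nbhd {S : Set M} (hS : S.Finite) (ρ : ℕ) : (nbhd ρ S).Finite :=
  (hS.biUnion fun a _ => (Set.finite_Icc (-(ρ : ℤ)) ρ).image (shift a)).subset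
    fun _ ⟨_, ha, k, hk, hb⟩ => Set.mem_biUnion ha ⟨k, abs_le.1 hk, hb.symm⟩

def nbhdType (ρ : ℕ) (a : M) : Set.Icc (-(ρ : ℤ)) ρ → Prop := fun k => AM (shift a k)

lemma sameNbhdType_of_nbhdType_eq {ρ : ℕ} {a b : M} (h : nbhdType ρ a = nbhdType ρ b) :
    SameNbhdType ρ a b :=
  fun k hk => Iff.of_eq (congrFun h ⟨k, abs_le.1 hk⟩)

lemma SameNbhdType.symm {ρ : ℕ} {a b : M} (h : SameNbhdType ρ a b) : SameNbhdType ρ b a :=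
  fun k hk => (h k hk).symm

lemma Set.finite_setOf_finite_fiber {α β : Type*} [Finite β] (f : α → β) :
    {a | (f ⁻¹' {f a}).Finite}.Finite :=
  (Set.finite_iUnion fun p : {p // (f ⁻¹' {p}).Finite} => p.2).subset
    fun a ha => Set.mem_iUnion.2 ⟨⟨f a, ha⟩, rfl⟩

/-- `SameRType` for tuples indexed by an arbitrary type, without the implicit `0` coordinate. -/
def SameType {γ : Type*} (ρ : ℕ) (h h' : γ → M) : Prop :=
  (∀ p q (k : ℤ), |k| ≤ ρ → (h q = shift (h p) k ↔ h' q = shift (h' p) k)) ∧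
  ∀ p, SameNbhdType ρ (h p) (h' p)

namespace SameType
variable {γ δ : Type*} {ρ ρ' : ℕ} {h h' : γ → M}

lemma comp (hT : SameType ρ h h') (u : δ → γ) : SameType ρ (h ∘ u) (h' ∘ u) :=
  ⟨fun p q => hT.1 (u p) (u q), fun p => hT.2 (u p)⟩

lemma of_shift [IsFreeSucc M] (hT : SameType ρ h h') {H H' : δ → M} (π : δ → γ)
    (κ : δ → ℤ) (hH : ∀ o, H o = shift (h (π o)) (κ o))
    (hH' : ∀ o, H' o = shift (h' (π o)) (κ o)) (hκ : ∀ o, |κ o| + ρ' ≤ ρ)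
    (hκκ : ∀ o o', |κ o' - κ o| + ρ' ≤ ρ) : SameType ρ' H H' := by
  refine ⟨fun o o' k hk => ?_, fun o k hk => ?_⟩
  · simp only [hH, hH', shift_shift, shift_eq_shift_iff]
    refine hT.1 _ _ _ (abs_le.2 ?_)
    have := hκκ o o'
    constructor <;> linarith [abs_le.1 hk, le_abs_self (κ o' - κ o), neg_abs_le (κ o' - κ o)]
  · simp only [hH, hH', shift_shift]
    refine hT.2 _ _ (abs_le.2 ?_)
    have := hκ o
    constructor <;> linarith [abs_le.1 hk, le_abs_self (κ o), neg_abs_le (κ o)]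

lemma of_far [IsFreeSucc M] (hT : SameType ρ h h') (hρ : ρ' ≤ ρ) {x : M} {H H' : δ → M}
    (π : δ → Option γ) (hH : ∀ o, H o = (π o).elim' x h)
    (hH' : ∀ o, H' o = (π o).elim' x h')
    (hx : ∀ p, ¬IsNear ρ' (h p) x ∧ ¬IsNear ρ' (h' p) x) : SameType ρ' H H' := by
  refine ⟨fun o o' k hk => ?_, fun o k hk => ?_⟩
  · simp only [hH, hH']
    rcases π o with _ | p <;> rcases π o' with _ | p'
    · rfl
    · exact iff_of_false (fun e => (hx p').1 (IsNear.symm ⟨k, hk, e⟩))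
        (fun e => (hx p').2 (IsNear.symm ⟨k, hk, e⟩))
    · exact iff_of_false (fun e => (hx p).1 ⟨k, hk, e⟩) (fun e => (hx p).2 ⟨k, hk, e⟩)
    · exact hT.1 p p' k (hk.trans (by exact_mod_cast hρ))
  · simp only [hH, hH']
    rcases π o with _ | p
    · rfl
    · exact hT.2 p k (hk.trans (by exact_mod_cast hρ))

lemma of_exchange [IsFreeSucc M] {b b' : M} (hbb' : ¬IsNear ρ b b')
    (hN : SameNbhdType ρ b b')
    (hh : ∀ p, h p = b ∧ h' p = b' ∨ h p = b' ∧ h' p = b ∨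
      h' p = h p ∧ ¬IsNear ρ (h p) b ∧ ¬IsNear ρ (h p) b') :
    SameType ρ h h' := by
  refine ⟨fun p q k hk => ?_, fun p => ?_⟩
  · have hb'b : ¬IsNear ρ b' b := fun e => hbb' e.symm
    have key : ∀ u u' w w' : M,
        (u = b ∧ u' = b' ∨ u = b' ∧ u' = b ∨
          u' = u ∧ ¬IsNear ρ u b ∧ ¬IsNear ρ u b') →
        (w = b ∧ w' = b' ∨ w = b' ∧ w' = b ∨
          w' = w ∧ ¬IsNear ρ w b ∧ ¬IsNear ρ w b') →
        (w = shift u k ↔ w' = shift u' k) := by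
      rintro u u' w w' (⟨rfl, rfl⟩ | ⟨rfl, rfl⟩ | ⟨rfl, hu, hu'⟩)
        (⟨rfl, rfl⟩ | ⟨rfl, rfl⟩ | ⟨rfl, hw, hw'⟩)
      · rw [self_eq_shift_iff, self_eq_shift_iff]
      · exact iff_of_false (fun e => hbb' ⟨k, hk, e⟩) (fun e => hb'b ⟨k, hk, e⟩)
      · exact iff_of_false (fun e => hw (IsNear.symm ⟨k, hk, e⟩))
          (fun e => hw' (IsNear.symm ⟨k, hk, e⟩))
      · exact iff_of_false (fun e => hb'b ⟨k, hk, e⟩) (fun e => hbb' ⟨k, hk, e⟩)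
      · rw [self_eq_shift_iff, self_eq_shift_iff]
      · exact iff_of_false (fun e => hw' (IsNear.symm ⟨k, hk, e⟩))
          (fun e => hw (IsNear.symm ⟨k, hk, e⟩))
      · exact iff_of_false (fun e => hu ⟨k, hk, e⟩) (fun e => hu' ⟨k, hk, e⟩)
      · exact iff_of_false (fun e => hu' ⟨k, hk, e⟩) (fun e => hu ⟨k, hk, e⟩)
      · rfl
    exact key _ _ _ _ (hh p) (hh q)
  · rcases hh p with ⟨hp, hp'⟩ | ⟨hp, hp'⟩ | ⟨hp', -⟩ <;> rw [hp']
    · rw [hp]; exact hN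
    · rw [hp]; exact hN.symm
    · exact fun _ _ => Iff.rfl

end SameType

/-- The invariant of the back-and-forth argument. Comparing the joint tuple with its swap, rather
than `f` with `g`, is what lets a move that is far from `f` but near `g` be answered. -/
def Exchangeable {γ : Type*} (ρ : ℕ) (f g : γ → M) : Prop :=
  SameType ρ (Sum.elim f g) (Sum.elim g f)

namespace Exchangeable
variable {γ δ : Type*} {ρ ρ' : ℕ} {f g : γ → M}

lemma sameType (hE : Exchangeable ρ f g) : SameType ρ f g := hE.comp Sum.inl

lemma symm (hE : Exchangeable ρ f g) : Exchangeable ρ g f := by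
  simpa [Exchangeable, Sum.elim_swap] using hE.comp Sum.swap

lemma comp (hE : Exchangeable ρ f g) (u : δ → γ) : Exchangeable ρ (f ∘ u) (g ∘ u) := by
  simpa [Exchangeable, Sum.elim_comp_map] using SameType.comp hE (Sum.map u u)

lemma exists_extend [IsFreeSucc M] (hE : Exchangeable ρ f g) (hρ : 2 * ρ' ≤ ρ) (x : M) :
    ∃ y, Exchangeable ρ' (Option.elim' x f) (Option.elim' y g) := by
  -- A move near a coordinate is answered by its mirror image across the swap, any other by itself.
  by_cases hx : ∃ p, IsNear ρ' (Sum.elim f g p) x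
  · obtain ⟨p, k₀, hk₀, rfl⟩ := hx
    refine ⟨shift (Sum.elim g f p) k₀, SameType.of_shift hE
      (Sum.elim (Option.elim' p Sum.inl) (Option.elim' p.swap Sum.inr))
      (Sum.elim (Option.elim' k₀ 0) (Option.elim' k₀ 0)) ?_ ?_ ?_ ?_⟩
    · rcases p with p | p <;> rintro ((_ | i) | (_ | i)) <;> rfl
    · rcases p with p | p <;> rintro ((_ | i) | (_ | i)) <;> rfl
    · rintro ((_ | i) | (_ | i)) <;> simp <;> omega
    · rintro ((_ | i) | (_ | i)) ((_ | j) | (_ | j)) <;> simp <;> omega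
  · push Not at hx
    refine ⟨x, SameType.of_far hE (by omega) (Sum.elim (Option.map Sum.inl) (Option.map Sum.inr))
      ?_ ?_ fun p => ⟨hx p, ?_⟩⟩
    · rintro ((_ | i) | (_ | i)) <;> rfl
    · rintro ((_ | i) | (_ | i)) <;> rfl
    · rcases p with p | p
      exacts [hx (Sum.inr p), hx (Sum.inl p)]

end Exchangeable

lemma exchangeable_update [IsFreeSucc M] {γ : Type*} [DecidableEq γ] {ρ : ℕ} (f : γ → M)
    (i : γ) {b' : M} (hfar : ∀ j ≠ i, ¬IsNear ρ (f j) (f i) ∧ ¬IsNear ρ (f j) b')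
    (hib' : ¬IsNear ρ (f i) b') (hN : SameNbhdType ρ (f i) b') :
    Exchangeable ρ f (Function.update f i b') := by
  refine SameType.of_exchange hib' hN fun p => ?_
  rcases p with j | j <;> by_cases hj : j = i
  · subst hj; simp
  · simp [Function.update_of_ne hj, hfar j hj]
  · subst hj; simp
  · simp [Function.update_of_ne hj, hfar j hj]

lemma exists_realize_eq_shift [IsFreeSucc M] {β : Type*} (t : L.Term β) :
    ∃ (i : Option β) (k : ℤ), |k| ≤ termRad t ∧
      ∀ f : β → M, t.realize f = shift (Option.elim' zeroM f i) k := by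
  induction t with
  | var i => exact ⟨some i, 0, by simp, fun f => rfl⟩
  | func F ts ih =>
    cases F with
    | zero => exact ⟨none, 0, by simp, fun f => funMap_zero _⟩
    | succ =>
      obtain ⟨i, k, hk, e⟩ := ih 0
      refine ⟨i, k + 1, ?_, fun f => ?_⟩
      · simp only [termRad, funcWeight, Fin.sum_univ_one]
        have := abs_le.1 hk; rw [abs_le]; push_cast; constructor <;> linarith
      · simp [Term.realize, e, succ_eq_shift, shift_shift]
    | pred =>
      obtain ⟨i, k, hk, e⟩ := ih 0
      refine ⟨i, k - 1, ?_, fun f => ?_⟩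
      · simp only [termRad, funcWeight, Fin.sum_univ_one]
        have := abs_le.1 hk; rw [abs_le]; push_cast; constructor <;> linarith
      · simp [Term.realize, e, pred_eq_shift, shift_shift, sub_eq_add_neg]

section Realize
variable {α : Type*} {n : ℕ}

def extValuation (v : α → M) (xs : Fin n → M) : Option (α ⊕ Fin n) → M :=
  Option.elim' zeroM (Sum.elim v xs)

variable [IsFreeSucc M]

theorem SameType.realize_iff_of_isQF {φ : L.BoundedFormula α n} (hφ : φ.IsQF) {ρ : ℕ}
    (hρ : rad φ ≤ ρ) {v w : α → M} {xs ys : Fin n → M}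
    (hT : SameType ρ (extValuation v xs) (extValuation w ys)) :
    φ.Realize v xs ↔ φ.Realize w ys := by
  revert hρ
  induction hφ with
  | falsum => exact fun _ => Iff.rfl
  | of_isAtomic h =>
    intro hρ
    cases h with
    | equal t₁ t₂ =>
      obtain ⟨i, k, hk, e⟩ := exists_realize_eq_shift (M := M) t₁
      obtain ⟨j, l, hl, e'⟩ := exists_realize_eq_shift (M := M) t₂
      simp only [BoundedFormula.realize_bdEqual, e, e', shift_eq_shift_iff]
      refine hT.1 j i (l - k) (abs_le.2 ?_)
      have : termRad t₁ + termRad t₂ ≤ ρ := hρ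
      constructor <;> linarith [abs_le.1 hk, abs_le.1 hl]
    | rel R ts =>
      cases R
      obtain ⟨i, k, hk, e⟩ := exists_realize_eq_shift (M := M) (ts 0)
      change Structure.RelMap (L := L) LRel.A _ ↔ Structure.RelMap (L := L) LRel.A _
      rw [relMap_A, relMap_A, e, e]
      refine hT.2 i k (hk.trans ?_)
      have : ∑ i, termRad (ts i) ≤ ρ := hρ
      rw [Fin.sum_univ_one] at this
      exact_mod_cast this
  | imp _ _ ih₁ ih₂ =>
    intro hρ
    have : rad _ + rad _ ≤ ρ := hρ
    simp only [BoundedFormula.realize_imp]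
    exact imp_congr (ih₁ (by omega)) (ih₂ (by omega))

def snocIndex : Option (α ⊕ Fin (n + 1)) → Option (Option (α ⊕ Fin n))
  | none => some none
  | some (.inl a) => some (some (.inl a))
  | some (.inr i) => Fin.lastCases none (fun j => some (some (.inr j))) i

omit [IsFreeSucc M] in
lemma elim'_comp_snocIndex (v : α → M) (xs : Fin n → M) (x : M) :
    Option.elim' x (extValuation v xs) ∘ snocIndex = extValuation v (Fin.snoc xs x) := by
  funext o
  rcases o with _ | a | i
  · rfl
  · rfl
  · refine Fin.lastCases ?_ (fun j => ?_) i <;> simp [snocIndex, extValuation]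

lemma Exchangeable.leftTotal_snoc {ρ ρ' : ℕ} {v w : α → M} {xs ys : Fin n → M}
    (hE : Exchangeable ρ (extValuation v xs) (extValuation w ys))
    (hρ : 2 * ρ' ≤ ρ) :
    Relator.LeftTotal fun x y => Exchangeable ρ' (extValuation v (Fin.snoc xs x))
      (extValuation w (Fin.snoc ys y)) := fun x =>
  (hE.exists_extend hρ x).imp fun y hy => by
    simpa only [elim'_comp_snocIndex] using hy.comp snocIndex

lemma Exchangeable.biTotal_snoc {ρ ρ' : ℕ} {v w : α → M} {xs ys : Fin n → M}
    (hE : Exchangeable ρ (extValuation v xs) (extValuation w ys))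
    (hρ : 2 * ρ' ≤ ρ) :
    Relator.BiTotal fun x y => Exchangeable ρ' (extValuation v (Fin.snoc xs x))
      (extValuation w (Fin.snoc ys y)) :=
  ⟨hE.leftTotal_snoc hρ, fun y =>
    (hE.symm.leftTotal_snoc hρ y).imp fun _ => Exchangeable.symm⟩

theorem Exchangeable.realize_iff_of_isPrenex {φ : L.BoundedFormula α n} (hφ : φ.IsPrenex)
    {ρ : ℕ} (hρ : rad φ ≤ ρ) {v w : α → M} {xs ys : Fin n → M}
    (hE : Exchangeable ρ (extValuation v xs) (extValuation w ys)) :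
    φ.Realize v xs ↔ φ.Realize w ys := by
  induction hφ generalizing ρ with
  | of_isQF h => exact hE.sameType.realize_iff_of_isQF h hρ
  | all _ ih =>
    simp only [BoundedFormula.realize_all]
    exact (hE.biTotal_snoc hρ).rel_forall fun _ _ => ih le_rfl
  | ex _ ih =>
    simp only [BoundedFormula.realize_ex]
    exact (hE.biTotal_snoc (by simpa [rad] using hρ)).rel_exists fun _ _ => ih le_rfl

end Realize

theorem realize_update_iff [IsFreeSucc M] {β : Type*} [DecidableEq β] {φ : L.Formula β}
    (hφ : φ.IsPrenex) {ρ : ℕ} (hρ : rad φ ≤ ρ) (V : β → M) (i : β) (S : Set M)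
    (hS : insert zeroM (V '' {i}ᶜ) ⊆ S) (hi : V i ∉ nbhd ρ S) {b' : M}
    (hb' : b' ∉ nbhd ρ (insert (V i) S)) (hN : SameNbhdType ρ (V i) b') :
    φ.Realize V ↔ φ.Realize (Function.update V i b') := by
  have hupdate : extValuation (Function.update V i b') default =
      Function.update (extValuation V (default : Fin 0 → M)) (some (.inl i)) b' := by
    funext o
    rcases o with _ | j | j
    · rfl
    · simp only [extValuation, Option.elim', Sum.elim_inl, Function.update_apply,
        Option.some.injEq, Sum.inl.injEq]
    · exact j.elim0
  refine Exchangeable.realize_iff_of_isPrenex hφ hρ ?_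
  rw [hupdate]
  refine exchangeable_update _ _ (fun j hj => ?_) (fun h => hb' ⟨V i, by simp, h⟩) hN
  have hj' : extValuation V default j ∈ S := by
    refine hS ?_
    rcases j with _ | j | j
    · exact Set.mem_insert _ _
    · exact Or.inr ⟨j, fun h => hj (by rw [h]), rfl⟩
    · exact j.elim0
  exact ⟨fun h => hi ⟨_, hj', h⟩, fun h => hb' ⟨_, Set.mem_insert_of_mem _ hj', h⟩⟩

theorem realize_pair_of_far [IsFreeSucc M] {m : ℕ} {φ : L.Formula (Fin 2 ⊕ Fin m)}
    (hφ : φ.IsPrenex) {a b b' : M} {c : Fin m → M} (hab : φ.Realize (Sum.elim ![a, b] c))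
    (hb : b ∉ nbhd (rad φ) (insert a (insert zeroM (Set.range c))))
    (hb' : b' ∉ nbhd (rad φ) (insert b (insert a (insert zeroM (Set.range c)))))
    (hN : SameNbhdType (rad φ) b b') :
    φ.Realize (Sum.elim ![a, b'] c) := by
  have hS : insert zeroM (Sum.elim ![a, b] c '' {.inl 1}ᶜ) ⊆
      insert a (insert zeroM (Set.range c)) := by
    rintro _ (rfl | ⟨j | t, hj, rfl⟩)
    · exact .inr (.inl rfl)
    · fin_cases j
      exacts [.inl rfl, absurd rfl hj]
    · exact .inr (.inr ⟨t, rfl⟩)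
  have hupdate : Function.update (Sum.elim ![a, b] c) (.inl 1) b' = Sum.elim ![a, b'] c := by
    funext j
    rcases j with j | t
    · fin_cases j <;> rfl
    · rfl
  rw [← hupdate]
  exact (realize_update_iff hφ le_rfl _ (.inl 1) _ hS hb hb' hN).1 hab

end

lemma IsMutuallyAlgebraic.finite_realize {L' : Language} {M : Type*} [L'.Structure M]
    {φ : L'.Formula (Fin 2 ⊕ M)} (hφ : IsMutuallyAlgebraic L' M φ) (a : M) :
    {b | φ.Realize (Sum.elim ![a, b] id)}.Finite := by
  obtain ⟨k, hk⟩ := hφ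
  have hinj : Function.Injective fun b : M => ![a, b] := fun b b' h => congrFun h 1
  refine ((hk {0} (Set.singleton_nonempty 0) ⟨1, by simp⟩ ![a, a]).1.preimage
    hinj.injOn).subset fun b hb => ⟨?_, hb⟩
  simp

theorem mutuallyAlgebraic_close_or_exceptional_general (R : Set (List Bool))
    (M : Type*) [L.Structure M] (hM : M ⊨ TR R) {m : ℕ}
    (φ' : L.Formula (Fin 2 ⊕ Fin m)) (hφ' : φ'.IsPrenex) (c : Fin m → M)
    (hma : IsMutuallyAlgebraic L M (φ'.relabel (Sum.map id c))) :
    ∃ X : Set M, X.Finite ∧ ∀ a b : M,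
      (φ'.relabel (Sum.map id c)).Realize (Sum.elim ![a, b] id) →
        (∃ k : ℤ, |k| ≤ (rad φ' : ℤ) ∧ b = shift a k) ∨ a ∈ X ∨ b ∈ X := by
  have := IsFreeSucc.of_model hM
  have hrel (a b : M) : (φ'.relabel (Sum.map id c)).Realize (Sum.elim ![a, b] id) ↔
      φ'.Realize (Sum.elim ![a, b] c) := by
    rw [Formula.realize_relabel, Sum.elim_comp_map]; rfl
  set r := rad φ'
  let base : Set M := insert zeroM (Set.range c)
  refine ⟨nbhd r base ∪ {b | (nbhdType r ⁻¹' {nbhdType r b}).Finite},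
    ((Set.finite_range c).insert _).nbhd r |>.union (Set.finite_setOf_finite_fiber _),
    fun a b hab => ?_⟩
  by_cases hnear : IsNear r a b
  · exact Or.inl hnear
  refine Or.inr (Or.inr (by_contra fun hb => ?_))
  obtain ⟨hb_base, hb_inf⟩ := not_or.1 hb
  replace hb_inf : (nbhdType r ⁻¹' {nbhdType r b}).Infinite := hb_inf
  have hb_far : b ∉ nbhd r (insert a base) := by
    rintro ⟨s, rfl | hs, hsb⟩
    exacts [hnear hsb, hb_base ⟨s, hs, hsb⟩]
  have hfin := (((Set.finite_range c).insert zeroM).insert a).insert b |>.nbhd r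
  refine ((hb_inf.sdiff hfin).mono fun b' hb' => ?_) (hma.finite_realize a)
  obtain ⟨hN, hb'_far⟩ := hb'
  exact (hrel a b').2 (realize_pair_of_far hφ' ((hrel a b).1 hab) hb_far hb'_far
    (sameNbhdType_of_nbhdType_eq hN.symm))

/-- If `φ(x, y) = φ'(x, y, c̄)` is mutually algebraic over a model `M` of `T_R`, where `φ'`
is prenex with radius `r`, then there is a finite set `X ⊆ M` such that whenever
`M ⊨ φ(a, b)`, either `a` and `b` are at distance at most `r`, or `a ∈ X`, or `b ∈ X`. -/
theorem mutuallyAlgebraic_close_or_exceptional (R : Set (List Bool)) (hTree : IsBinaryTree R)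
    (M : Type*) [L.Structure M] (hM : M ⊨ TR R) {m : ℕ}
    (φ' : L.Formula (Fin 2 ⊕ Fin m)) (hφ' : φ'.IsPrenex) (c : Fin m → M)
    (hma : IsMutuallyAlgebraic L M (φ'.relabel (Sum.map id c))) :
    ∃ X : Set M, X.Finite ∧ ∀ a b : M,
      (φ'.relabel (Sum.map id c)).Realize (Sum.elim ![a, b] id) →
        (∃ k : ℤ, |k| ≤ (rad φ' : ℤ) ∧ b = shift a k) ∨ a ∈ X ∨ b ∈ X :=
  mutuallyAlgebraic_close_or_exceptional_general R M hM φ' hφ' c hma
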